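/- Let μ be a Borel probability measure on R_+ with finite first moment. Then the U-quantizations U^(N)(μ) converge to μ in the 1-Wasserstein distance as N → ∞. -/

import Mathlib

open MeasureTheory Filter Topology
open scoped ENNReal BigOperators

/-- Empirical measure `(1/N) ∑ δ_{x_i}` on `ℝ`. -/
noncomputable def emp (N : ℕ) (x : Fin N → ℝ) : Measure ℝ :=
  (N : ℝ≥0∞)⁻¹ • ∑ i : Fin N, Measure.dirac (x i)

/-- 1-Wasserstein distance via couplings. -/
noncomputable def Wdist (μ ν : Measure ℝ) : ℝ≥0∞ :=
  ⨅ (π : Measure (ℝ × ℝ)) (_ : π.map Prod.fst = μ ∧ π.map Prod.snd = ν),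
    ∫⁻ p, ENNReal.ofReal |p.1 - p.2| ∂π

/-- Quantile function `F_μ⁻¹(u) = inf {x ∈ ℝ₊ : F_μ(x) ≥ u}`. -/
noncomputable def qf (μ : Measure ℝ) (u : ℝ) : ℝ :=
  sInf {x : ℝ | 0 ≤ x ∧ u ≤ ProbabilityTheory.cdf μ x}

/-- Atoms of the 𝒰-quantization. -/
noncomputable def atomU (μ : Measure ℝ) (N i : ℕ) : ℝ :=
  N * ∫ u in ((i : ℝ) - 1) / N..(i : ℝ) / N, qf μ u

/-- The 𝒰-quantization `𝒰^{(N)}(μ)`. -/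
noncomputable def Uquant (μ : Measure ℝ) (N : ℕ) : Measure ℝ :=
  emp N (fun i => atomU μ N (i.1 + 1))

open Set

set_option linter.unusedSectionVars false
set_option maxHeartbeats 800000



variable (μ : Measure ℝ) [IsProbabilityMeasure μ]

lemma qfset_bddBelow (u : ℝ) : BddBelow {x : ℝ | 0 ≤ x ∧ u ≤ ProbabilityTheory.cdf μ x} :=
  ⟨0, fun x hx => hx.1⟩

lemma qfset_nonempty {u : ℝ} (hu : u < 1) :
    {x : ℝ | 0 ≤ x ∧ u ≤ ProbabilityTheory.cdf μ x}.Nonempty := by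
  have h := ProbabilityTheory.tendsto_cdf_atTop (μ := μ)
  have : ∀ᶠ x in atTop, u < ProbabilityTheory.cdf μ x :=
    h.eventually_const_lt hu
  obtain ⟨x, hx⟩ := (this.and (eventually_ge_atTop (0:ℝ))).exists
  exact ⟨x, hx.2, hx.1.le⟩

lemma qf_nonneg (u : ℝ) : 0 ≤ qf μ u :=
  Real.sInf_nonneg (fun x hx => hx.1)

lemma qf_mono {u v : ℝ} (huv : u ≤ v) (hv : v < 1) : qf μ u ≤ qf μ v := by
  apply csInf_le_csInf (qfset_bddBelow μ u) (qfset_nonempty μ hv)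
  exact fun x hx => ⟨hx.1, huv.trans hx.2⟩

lemma cdf_qf_ge {u : ℝ} (hu : u < 1) : u ≤ ProbabilityTheory.cdf μ (qf μ u) := by
  set S := {x : ℝ | 0 ≤ x ∧ u ≤ ProbabilityTheory.cdf μ x} with hS
  have hne := qfset_nonempty μ (u := u) hu
  have hbdd := qfset_bddBelow μ u
  have hrc : ContinuousWithinAt (ProbabilityTheory.cdf μ) (Ici (qf μ u)) (qf μ u) :=
    (ProbabilityTheory.cdf μ).right_continuous _
  have htend : Tendsto (ProbabilityTheory.cdf μ) (𝓝[>] (qf μ u))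
      (𝓝 (ProbabilityTheory.cdf μ (qf μ u))) :=
    hrc.tendsto.mono_left (nhdsWithin_mono _ Ioi_subset_Ici_self)
  refine ge_of_tendsto htend ?_
  filter_upwards [self_mem_nhdsWithin] with x hx
  obtain ⟨s, hsS, hsx⟩ := (csInf_lt_iff hbdd hne).mp hx
  exact hsS.2.trans ((ProbabilityTheory.cdf μ).mono hsx.le)

lemma qf_le_iff {u t : ℝ} (hu : u < 1) (ht : 0 ≤ t) :
    qf μ u ≤ t ↔ u ≤ ProbabilityTheory.cdf μ t := by
  constructor
  · intro h
    exact (cdf_qf_ge μ hu).trans ((ProbabilityTheory.cdf μ).mono h)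
  · intro h
    exact csInf_le (qfset_bddBelow μ u) ⟨ht, h⟩

noncomputable abbrev nu : Measure ℝ := volume.restrict (Set.Ioo (0:ℝ) 1)

lemma qf_monotoneOn : MonotoneOn (qf μ) (Set.Ioo (0:ℝ) 1) :=
  fun _ _ _ hv huv => qf_mono μ huv hv.2

lemma qf_aemeasurable : AEMeasurable (qf μ) nu :=
  aemeasurable_restrict_of_monotoneOn measurableSet_Ioo (qf_monotoneOn μ)

lemma map_qf (hsupp : μ (Set.Iio 0) = 0) : Measure.map (qf μ) nu = μ := by
  have ham := qf_aemeasurable μ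
  have hIic : ∀ t : ℝ, (Measure.map (qf μ) nu) (Iic t) = μ (Iic t) := by
    intro t
    rw [Measure.map_apply_of_aemeasurable ham measurableSet_Iic]
    rcases lt_or_ge t 0 with ht | ht
    · have h1 : qf μ ⁻¹' Iic t ∩ Set.Ioo 0 1 = ∅ := by
        ext u
        simp only [Set.mem_inter_iff, Set.mem_preimage, Set.mem_Iic, Set.mem_empty_iff_false,
          iff_false, not_and]
        intro hu
        exact absurd hu (not_le.mpr (lt_of_lt_of_le ht (qf_nonneg μ u)))
      rw [Measure.restrict_apply' measurableSet_Ioo, h1]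
      rw [measure_mono_null (Set.Iic_subset_Iio.mpr ht) hsupp]
      simp
    · have hkey : qf μ ⁻¹' Iic t ∩ Set.Ioo 0 1 = Set.Ioo 0 1 ∩ Set.Iic (ProbabilityTheory.cdf μ t) := by
        ext u
        simp only [Set.mem_inter_iff, Set.mem_preimage, Set.mem_Iic, Set.mem_Ioo]
        constructor
        · rintro ⟨h1, h2⟩
          exact ⟨h2, ((qf_le_iff μ h2.2 ht).mp h1)⟩
        · rintro ⟨h1, h2⟩
          exact ⟨(qf_le_iff μ h1.2 ht).mpr h2, h1⟩
      rw [Measure.restrict_apply' measurableSet_Ioo, hkey,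
        ← ProbabilityTheory.ofReal_cdf]
      have hc0 : 0 ≤ ProbabilityTheory.cdf μ t := ProbabilityTheory.cdf_nonneg (μ := μ) t
      have hc1 : ProbabilityTheory.cdf μ t ≤ 1 := ProbabilityTheory.cdf_le_one (μ := μ) t
      rcases eq_or_lt_of_le hc1 with h1 | h1
      · rw [Set.inter_eq_left.mpr (fun u hu => by simp [Set.mem_Iic, h1 ▸ hu.2.le])]
        simp [Real.volume_Ioo, h1]
      · have : Set.Ioo (0:ℝ) 1 ∩ Set.Iic (ProbabilityTheory.cdf μ t) =
            Set.Ioc 0 (ProbabilityTheory.cdf μ t) := by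
          ext u
          simp only [Set.mem_inter_iff, Set.mem_Ioo, Set.mem_Iic, Set.mem_Ioc]
          exact ⟨fun h => ⟨h.1.1, h.2⟩, fun h => ⟨⟨h.1, lt_of_le_of_lt h.2 h1⟩, h.2⟩⟩
        rw [this, Real.volume_Ioc, sub_zero]
  have : IsProbabilityMeasure (Measure.map (qf μ) nu) := by
    constructor
    rw [Measure.map_apply_of_aemeasurable ham MeasurableSet.univ]
    simp [Real.volume_Ioo]
  exact Measure.ext_of_Iic _ μ hIic


noncomputable def gN (μ : Measure ℝ) (N : ℕ) (u : ℝ) : ℝ :=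
  atomU μ N ⌈(N : ℝ) * u⌉₊

lemma gN_measurable (N : ℕ) : Measurable (gN μ N) :=
  (measurable_from_nat (f := atomU μ N)).comp
    (Nat.measurable_ceil.comp (measurable_const.mul measurable_id))

lemma ceil_eq_on_Ioc {N i : ℕ} (hN : 1 ≤ N) (hi : 1 ≤ i) {u : ℝ}
    (hu : u ∈ Set.Ioc (((i:ℝ) - 1)/N) ((i:ℝ)/N)) : ⌈(N : ℝ) * u⌉₊ = i := by
  have hN0 : (0:ℝ) < N := by exact_mod_cast hN
  rw [Nat.ceil_eq_iff (by omega)]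
  have h1 : ((i:ℝ) - 1) < N * u := by
    have h := hu.1
    rw [div_lt_iff₀ hN0, mul_comm] at h
    exact h
  have h2 : (N:ℝ) * u ≤ i := by
    have h := hu.2
    rw [le_div_iff₀ hN0, mul_comm] at h
    exact h
  refine ⟨?_, h2⟩
  have : ((i - 1 : ℕ) : ℝ) = (i:ℝ) - 1 := by
    have := Nat.cast_sub (R := ℝ) hi
    simpa using this
  rw [this]; exact h1

/-- The pieces of the partition of `Ioo 0 1`. -/
def sP (N : ℕ) (i : Fin N) : Set ℝ :=
  Set.Ioo (0:ℝ) 1 ∩ Set.Ioc ((i:ℝ)/N) (((i:ℝ)+1)/N)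

lemma sP_ae (N : ℕ) (hN : 1 ≤ N) (i : Fin N) :
    sP N i =ᵐ[volume] Set.Ioc ((i:ℝ)/N) (((i:ℝ)+1)/N) := by
  have hN0 : (0:ℝ) < N := by exact_mod_cast hN
  rw [Filter.eventuallyEq_set, ae_iff]
  have hnull : volume ({(1:ℝ)} : Set ℝ) = 0 := Real.volume_singleton
  refine measure_mono_null ?_ hnull
  intro u hu
  simp only [Set.mem_setOf_eq, sP, Set.mem_inter_iff, Set.mem_Ioo, Set.mem_Ioc] at hu
  simp only [Set.mem_singleton_iff]
  by_contra hne
  apply hu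
  constructor
  · rintro ⟨_, h⟩; exact h
  · rintro ⟨h1, h2⟩
    refine ⟨⟨?_, ?_⟩, h1, h2⟩
    · have : (0:ℝ) ≤ (i:ℝ)/N := by positivity
      linarith
    · have hle : ((i:ℝ)+1)/N ≤ 1 := by
        rw [div_le_one hN0]
        have : (i:ℕ) + 1 ≤ N := i.2
        exact_mod_cast this
      rcases lt_or_eq_of_le (h2.trans hle) with h | h
      · exact h
      · exact absurd h hne

lemma sP_volume (N : ℕ) (hN : 1 ≤ N) (i : Fin N) :
    volume (sP N i) = (N : ℝ≥0∞)⁻¹ := by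
  have hN0 : (0:ℝ) < N := by exact_mod_cast hN
  rw [measure_congr (sP_ae N hN i), Real.volume_Ioc]
  have : ((i:ℝ)+1)/N - (i:ℝ)/N = (N:ℝ)⁻¹ := by field_simp; ring
  rw [this, ← ENNReal.ofReal_natCast, ← ENNReal.ofReal_inv_of_pos hN0]

lemma sP_union (N : ℕ) (hN : 1 ≤ N) : (⋃ i : Fin N, sP N i) = Set.Ioo (0:ℝ) 1 := by
  have hN0 : (0:ℝ) < N := by exact_mod_cast hN
  apply Set.Subset.antisymm
  · exact Set.iUnion_subset fun i => Set.inter_subset_left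
  · intro u hu
    set k := ⌈(N:ℝ) * u⌉₊ with hk
    have hNu : 0 < (N:ℝ) * u := by nlinarith [hu.1]
    have hk1 : 1 ≤ k := Nat.one_le_iff_ne_zero.mpr (by
      simp only [hk, ne_eq, Nat.ceil_eq_zero, not_le]; exact hNu)
    have hkN : k ≤ N := by
      rw [hk, Nat.ceil_le]
      nlinarith [hu.2]
    refine Set.mem_iUnion.mpr ⟨⟨k - 1, by omega⟩, ?_⟩
    have hcast : ((⟨k - 1, by omega⟩ : Fin N) : ℝ) = (k:ℝ) - 1 := by
      simp only [Fin.val_mk]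
      have := Nat.cast_sub (R := ℝ) hk1
      simpa using this
    refine ⟨hu, ?_⟩
    rw [hcast]
    constructor
    · rw [div_lt_iff₀ hN0]
      have := Nat.ceil_lt_add_one (le_of_lt hNu)
      rw [← hk] at this
      linarith [this]
    · rw [le_div_iff₀ hN0]
      have := Nat.le_ceil ((N:ℝ) * u)
      rw [← hk] at this
      linarith [this]

lemma sP_disjoint (N : ℕ) : Pairwise (Function.onFun Disjoint (sP N)) := by
  intro i j hij
  refine Disjoint.mono Set.inter_subset_right Set.inter_subset_right ?_
  rw [Set.Ioc_disjoint_Ioc]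
  rcases Fin.lt_or_lt_of_ne hij with h | h
  · have : (i:ℝ) + 1 ≤ (j:ℝ) := by exact_mod_cast h
    refine le_trans (min_le_left _ _) (le_trans ?_ (le_max_right _ _))
    gcongr
  · have : (j:ℝ) + 1 ≤ (i:ℝ) := by exact_mod_cast h
    refine le_trans (min_le_right _ _) (le_trans ?_ (le_max_left _ _))
    gcongr

lemma gN_const_on_sP {N : ℕ} (hN : 1 ≤ N) (i : Fin N) {u : ℝ} (hu : u ∈ sP N i) :
    gN μ N u = atomU μ N (i.1 + 1) := by
  unfold gN
  congr 1
  apply ceil_eq_on_Ioc hN (by omega)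
  have : ((i.1 + 1 : ℕ) : ℝ) = (i:ℝ) + 1 := by push_cast; ring
  rw [this]
  have h2 := hu.2
  constructor
  · have : ((i:ℝ) + 1 - 1) = (i:ℝ) := by ring
    rw [this]; exact h2.1
  · exact h2.2

lemma map_gN (N : ℕ) (hN : 1 ≤ N) : Measure.map (gN μ N) nu = Uquant μ N := by
  have hg := gN_measurable μ N
  have hmeas : ∀ i : Fin N, MeasurableSet (sP N i) := fun i =>
    measurableSet_Ioo.inter measurableSet_Ioc
  have h1 : nu = Measure.sum (fun i : Fin N => volume.restrict (sP N i)) := by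
    rw [← Measure.restrict_iUnion (sP_disjoint N) hmeas, sP_union N hN]
  rw [h1, Measure.map_sum hg.aemeasurable]
  have h2 : ∀ i : Fin N, Measure.map (gN μ N) (volume.restrict (sP N i)) =
      (N : ℝ≥0∞)⁻¹ • Measure.dirac (atomU μ N (i.1 + 1)) := by
    intro i
    have : Measure.map (gN μ N) (volume.restrict (sP N i)) =
        Measure.map (fun _ => atomU μ N (i.1 + 1)) (volume.restrict (sP N i)) := by
      apply Measure.map_congr
      exact ae_restrict_of_forall_mem (hmeas i) (fun u hu => gN_const_on_sP μ hN i hu)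
    rw [this, Measure.map_const, Measure.restrict_apply_univ, sP_volume N hN i]
  simp_rw [h2]
  rw [Measure.sum_fintype, ← Finset.smul_sum]
  rfl


lemma qf_integrableOn (hsupp : μ (Set.Iio 0) = 0) (hmom : Integrable (fun x => x) μ) :
    IntegrableOn (qf μ) (Set.Ioo (0:ℝ) 1) volume := by
  refine ⟨(qf_aemeasurable μ).aestronglyMeasurable, ?_⟩
  unfold HasFiniteIntegral
  have h1 : ∀ u : ℝ, (‖qf μ u‖₊ : ℝ≥0∞) = ENNReal.ofReal (qf μ u) := fun u =>
    Real.enorm_eq_ofReal (qf_nonneg μ u)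
  calc ∫⁻ u, (‖qf μ u‖₊ : ℝ≥0∞) ∂(volume.restrict (Set.Ioo 0 1))
      = ∫⁻ u, ENNReal.ofReal (qf μ u) ∂nu := by
        exact lintegral_congr h1
    _ = ∫⁻ x, ENNReal.ofReal x ∂(Measure.map (qf μ) nu) := by
        rw [lintegral_map' (Measurable.aemeasurable (by fun_prop)) (qf_aemeasurable μ)]
    _ = ∫⁻ x, ENNReal.ofReal x ∂μ := by rw [map_qf μ hsupp]
    _ ≤ ∫⁻ x, (‖x‖₊ : ℝ≥0∞) ∂μ := by
        apply lintegral_mono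
        intro x
        show ENNReal.ofReal x ≤ (‖x‖₊ : ℝ≥0∞)
        rw [show ((‖x‖₊ : ℝ≥0∞)) = ENNReal.ofReal ‖x‖ from (ofReal_norm x).symm]
        exact ENNReal.ofReal_le_ofReal (le_abs_self x)
    _ < ⊤ := hmom.2

lemma qf_integrableOn_Ioc (hsupp : μ (Set.Iio 0) = 0) (hmom : Integrable (fun x => x) μ) :
    IntegrableOn (qf μ) (Set.Ioc (0:ℝ) 1) volume :=
  (qf_integrableOn μ hsupp hmom).congr_set_ae (MeasureTheory.Ioo_ae_eq_Ioc).symm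

lemma qf_intervalIntegrable (hsupp : μ (Set.Iio 0) = 0) (hmom : Integrable (fun x => x) μ)
    {a b : ℝ} (ha : 0 ≤ a) (hab : a ≤ b) (hb : b ≤ 1) :
    IntervalIntegrable (qf μ) volume a b := by
  rw [intervalIntegrable_iff_integrableOn_Ioc_of_le hab]
  exact (qf_integrableOn_Ioc μ hsupp hmom).mono_set
    (Set.Ioc_subset_Ioc (by linarith) hb) |>.mono_measure le_rfl

lemma gN_integrableOn (N : ℕ) (hN : 1 ≤ N) :
    IntegrableOn (gN μ N) (Set.Ioo (0:ℝ) 1) volume := by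
  rw [← sP_union N hN, integrableOn_finite_iUnion]
  intro i
  have hmeas : MeasurableSet (sP N i) := measurableSet_Ioo.inter measurableSet_Ioc
  have : IntegrableOn (fun _ => atomU μ N (i.1 + 1)) (sP N i) volume := by
    rw [integrableOn_const_iff]
    right
    rw [sP_volume N hN i]
    simp [ENNReal.inv_lt_top]
    exact_mod_cast hN
  apply this.congr_fun (fun u hu => (gN_const_on_sP μ hN i hu).symm) hmeas

lemma wdist_le (N : ℕ) (hN : 1 ≤ N) (hsupp : μ (Set.Iio 0) = 0) :
    Wdist (Uquant μ N) μ ≤ ∫⁻ u, ENNReal.ofReal |gN μ N u - qf μ u| ∂nu := by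
  set pair : ℝ → ℝ × ℝ := fun u => (gN μ N u, qf μ u) with hpair
  have hpm : AEMeasurable pair nu :=
    ((gN_measurable μ N).aemeasurable).prodMk (qf_aemeasurable μ)
  set π : Measure (ℝ × ℝ) := Measure.map pair nu with hπ
  have hfst : π.map Prod.fst = Uquant μ N := by
    rw [hπ, AEMeasurable.map_map_of_aemeasurable measurable_fst.aemeasurable hpm]
    exact map_gN μ N hN
  have hsnd : π.map Prod.snd = μ := by
    rw [hπ, AEMeasurable.map_map_of_aemeasurable measurable_snd.aemeasurable hpm]
    exact map_qf μ hsupp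
  calc Wdist (Uquant μ N) μ ≤ ∫⁻ p, ENNReal.ofReal |p.1 - p.2| ∂π := by
        apply iInf_le_of_le π
        exact iInf_le_of_le ⟨hfst, hsnd⟩ le_rfl
    _ = ∫⁻ u, ENNReal.ofReal |gN μ N u - qf μ u| ∂nu := by
        rw [hπ, lintegral_map' (Measurable.aemeasurable (by fun_prop)) hpm]

lemma key_bound (N : ℕ) (hN : 1 ≤ N) (hsupp : μ (Set.Iio 0) = 0)
    (hmom : Integrable (fun x => x) μ) :
    ∫ u in Set.Ioo (0:ℝ) 1, |gN μ N u - qf μ u| ≤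
      2 * ∫ u in Set.Ioc (((N:ℝ)-1)/N) 1, qf μ u := by
  have hN0 : (0:ℝ) < N := by exact_mod_cast hN
  set f := qf μ with hf
  set g := gN μ N with hg
  have hfint : IntegrableOn f (Set.Ioo (0:ℝ) 1) volume := qf_integrableOn μ hsupp hmom
  have hgint : IntegrableOn g (Set.Ioo (0:ℝ) 1) volume := gN_integrableOn μ N hN
  have hsub : ∀ i : Fin N, sP N i ⊆ Set.Ioo (0:ℝ) 1 := fun i => Set.inter_subset_left
  have habs : IntegrableOn (fun u => |g u - f u|) (Set.Ioo (0:ℝ) 1) volume :=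
    (hgint.sub hfint).abs
  have hmeasP : ∀ i : Fin N, MeasurableSet (sP N i) := fun i =>
    measurableSet_Ioo.inter measurableSet_Ioc
  -- endpoints
  have hle : ∀ i : Fin N, (i:ℝ)/N ≤ ((i:ℝ)+1)/N := fun i => by
    gcongr <;> linarith
  have hup : ∀ i : Fin N, ((i:ℝ)+1)/N ≤ 1 := fun i => by
    rw [div_le_one hN0]
    have : (i:ℕ) + 1 ≤ N := i.2
    exact_mod_cast this
  have hlo : ∀ i : Fin N, (0:ℝ) ≤ (i:ℝ)/N := fun i => by positivity
  have hcilt1 : ∀ i : Fin N, (i:ℝ)/N < 1 := fun i =>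
    lt_of_lt_of_le (by rw [div_lt_div_iff₀ hN0 hN0]; nlinarith) (hup i)
  -- integral of f over sP i
  have hfsP : ∀ i : Fin N, ∫ u in sP N i, f u = ∫ u in ((i:ℝ)/N)..(((i:ℝ)+1)/N), f u := by
    intro i
    rw [intervalIntegral.integral_of_le (hle i), setIntegral_congr_set (sP_ae N hN i)]
  have hatom : ∀ i : Fin N, atomU μ N (i.1 + 1) = N * ∫ u in sP N i, f u := by
    intro i
    rw [hfsP i]
    unfold atomU
    have e1 : ((i.1 + 1 : ℕ) : ℝ) - 1 = (i:ℝ) := by push_cast; ring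
    have e2 : ((i.1 + 1 : ℕ) : ℝ) = (i:ℝ) + 1 := by push_cast; ring
    rw [e1, e2]
  have hintf_sP : ∀ i : Fin N, IntegrableOn f (sP N i) volume := fun i =>
    hfint.mono_set (hsub i)
  have hvol_toReal : ∀ i : Fin N, (volume (sP N i)).toReal = (N:ℝ)⁻¹ := by
    intro i
    rw [sP_volume N hN i, ENNReal.toReal_inv]
    simp
  have hconst_int : ∀ (i : Fin N) (c : ℝ), IntegrableOn (fun _ => c) (sP N i) volume := by
    intro i c
    rw [integrableOn_const_iff]
    right
    rw [sP_volume N hN i]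
    exact ENNReal.inv_lt_top.mpr (by exact_mod_cast hN)
  have hptf : ∀ i : Fin N, ∀ u ∈ sP N i, f ((i:ℝ)/N) ≤ f u := by
    intro i u hu
    exact qf_mono μ hu.2.1.le hu.1.2
  have ha_le : ∀ i : Fin N, f ((i:ℝ)/N) * (N:ℝ)⁻¹ ≤ ∫ u in sP N i, f u := by
    intro i
    have h1 : ∫ (_ : ℝ) in sP N i, f ((i:ℝ)/N) ∂volume = f ((i:ℝ)/N) * (N:ℝ)⁻¹ := by
      rw [setIntegral_const, measureReal_def, hvol_toReal i, smul_eq_mul, mul_comm]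
    rw [← h1]
    exact setIntegral_mono_on (hconst_int i _) (hintf_sP i) (hmeasP i) (hptf i)
  have hatom_ge : ∀ i : Fin N, f ((i:ℝ)/N) ≤ atomU μ N (i.1 + 1) := by
    intro i
    have h1 := ha_le i
    rw [hatom i]
    have h2 : (N:ℝ) * (f ((i:ℝ)/N) * (N:ℝ)⁻¹) ≤ N * ∫ u in sP N i, f u := by
      exact mul_le_mul_of_nonneg_left h1 hN0.le
    calc f ((i:ℝ)/N) = (N:ℝ) * (f ((i:ℝ)/N) * (N:ℝ)⁻¹) := by field_simp
      _ ≤ _ := h2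
  -- per-piece bound
  have hbound : ∀ i : Fin N, ∫ u in sP N i, |g u - f u| ≤
      2 * (∫ u in sP N i, f u) - 2 * (f ((i:ℝ)/N) * (N:ℝ)⁻¹) := by
    intro i
    set a := f ((i:ℝ)/N) with ha
    have hgconst : ∀ u ∈ sP N i, g u = atomU μ N (i.1 + 1) := fun u hu =>
      gN_const_on_sP μ hN i hu
    have hgint_sP : IntegrableOn g (sP N i) volume := hgint.mono_set (hsub i)
    have hga : IntegrableOn (fun u => g u - a) (sP N i) volume :=
      hgint_sP.sub (hconst_int i a)
    have hfa : IntegrableOn (fun u => f u - a) (sP N i) volume :=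
      (hintf_sP i).sub (hconst_int i a)
    have hrhs_int : IntegrableOn (fun u => (g u - a) + (f u - a)) (sP N i) volume :=
      hga.add hfa
    have h1 : ∫ u in sP N i, |g u - f u| ≤ ∫ u in sP N i, ((g u - a) + (f u - a)) := by
      apply setIntegral_mono_on (habs.mono_set (hsub i)) hrhs_int (hmeasP i)
      intro u hu
      have h2 : a ≤ f u := hptf i u hu
      have h3 : a ≤ g u := by rw [hgconst u hu]; exact hatom_ge i
      rw [abs_sub_le_iff]
      constructor <;> linarith
    have hgeq : ∫ u in sP N i, g u = ∫ u in sP N i, f u := by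
      have : ∫ u in sP N i, g u = ∫ (_ : ℝ) in sP N i, atomU μ N (i.1 + 1) ∂volume :=
        setIntegral_congr_fun (hmeasP i) hgconst
      rw [this, setIntegral_const, measureReal_def, hvol_toReal i, smul_eq_mul, hatom i]
      field_simp
    have hconst_eval : ∫ (_ : ℝ) in sP N i, a ∂volume = a * (N:ℝ)⁻¹ := by
      rw [setIntegral_const, measureReal_def, hvol_toReal i, smul_eq_mul, mul_comm]
    have h4 : ∫ u in sP N i, ((g u - a) + (f u - a)) =
        (∫ u in sP N i, g u) - a * (N:ℝ)⁻¹ + ((∫ u in sP N i, f u) - a * (N:ℝ)⁻¹) := by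
      rw [integral_add hga hfa,
        integral_sub hgint_sP (hconst_int i a), integral_sub (hintf_sP i) (hconst_int i a),
        hconst_eval]
    rw [h4, hgeq] at h1
    linarith
  -- sum up
  have hsplit : ∫ u in Set.Ioo (0:ℝ) 1, |g u - f u| = ∑ i : Fin N, ∫ u in sP N i, |g u - f u| := by
    rw [← sP_union N hN]
    exact integral_iUnion_fintype hmeasP (sP_disjoint N)
      (fun i => habs.mono_set (hsub i))
  have hsplitf : ∫ u in Set.Ioo (0:ℝ) 1, f u = ∑ i : Fin N, ∫ u in sP N i, f u := by
    rw [← sP_union N hN]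
    exact integral_iUnion_fintype hmeasP (sP_disjoint N) hintf_sP
  have hsum : ∫ u in Set.Ioo (0:ℝ) 1, |g u - f u| ≤
      2 * (∫ u in Set.Ioo (0:ℝ) 1, f u) - 2 * ∑ i : Fin N, f ((i:ℝ)/N) * (N:ℝ)⁻¹ := by
    rw [hsplit, hsplitf, Finset.mul_sum, Finset.mul_sum, ← Finset.sum_sub_distrib]
    exact Finset.sum_le_sum (fun i _ => hbound i)
  -- lower bound for the Riemann sum
  set θ : ℝ := ((N:ℝ) - 1)/N with hθ
  have hθ0 : 0 ≤ θ := by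
    apply div_nonneg _ hN0.le
    have : (1:ℝ) ≤ N := by exact_mod_cast hN
    linarith
  have hθ1 : θ ≤ 1 := by rw [div_le_one hN0]; linarith
  have hriemann : ∫ u in (0:ℝ)..θ, f u ≤ ∑ i : Fin N, f ((i:ℝ)/N) * (N:ℝ)⁻¹ := by
    have hrange : ∑ i : Fin N, f ((i:ℝ)/N) * (N:ℝ)⁻¹ =
        ∑ i ∈ Finset.range N, f ((i:ℝ)/N) * (N:ℝ)⁻¹ :=
      Fin.sum_univ_eq_sum_range (fun j : ℕ => f ((j:ℝ)/N) * (N:ℝ)⁻¹) N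
    set M := N - 1 with hM
    have hNM : N = M + 1 := by omega
    have hMcast : (M:ℝ) = (N:ℝ) - 1 := by
      rw [hM, Nat.cast_sub hN]; simp
    have hstep : ∀ j < M, ∫ u in Set.Ioc ((j:ℝ)/N) (((j:ℝ)+1)/N), f u ≤
        f (((j:ℝ)+1)/N) * (N:ℝ)⁻¹ := by
      intro j hj
      have hj1 : ((j:ℝ)+1)/N < 1 := by
        rw [div_lt_one hN0]
        have : (j:ℝ) + 1 ≤ (M:ℝ) := by exact_mod_cast hj
        rw [hMcast] at this
        linarith
      have hjle : (j:ℝ)/N ≤ ((j:ℝ)+1)/N := by gcongr; linarith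
      have hintj : IntegrableOn f (Set.Ioc ((j:ℝ)/N) (((j:ℝ)+1)/N)) volume := by
        apply (qf_integrableOn_Ioc μ hsupp hmom).mono_set
        exact Set.Ioc_subset_Ioc (by positivity) (le_of_lt hj1)
      have hvol : (volume (Set.Ioc ((j:ℝ)/N) (((j:ℝ)+1)/N))).toReal = (N:ℝ)⁻¹ := by
        rw [Real.volume_Ioc, ENNReal.toReal_ofReal (by linarith [hjle])]
        field_simp; ring
      have hc : ∫ (_ : ℝ) in Set.Ioc ((j:ℝ)/N) (((j:ℝ)+1)/N), f (((j:ℝ)+1)/N) ∂volume =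
          f (((j:ℝ)+1)/N) * (N:ℝ)⁻¹ := by
        rw [setIntegral_const, measureReal_def, hvol, smul_eq_mul, mul_comm]
      rw [← hc]
      apply setIntegral_mono_on hintj _ measurableSet_Ioc
      · intro u hu
        exact qf_mono μ hu.2 hj1
      · rw [integrableOn_const_iff]
        right
        rw [Real.volume_Ioc]
        exact ENNReal.ofReal_lt_top
    have hadj : ∑ j ∈ Finset.range M, ∫ u in ((j:ℝ)/N)..(((j:ℝ)+1)/N), f u =
        ∫ u in (0:ℝ)..θ, f u := by
      have := intervalIntegral.sum_integral_adjacent_intervals (μ := volume) (f := f)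
        (a := fun k => (k:ℝ)/N) (n := M) (fun k hk => by
          show IntervalIntegrable f volume ((k:ℝ)/N) (((k+1:ℕ):ℝ)/N)
          have hcast : ((k+1:ℕ):ℝ) = (k:ℝ) + 1 := by push_cast; ring
          rw [hcast]
          apply qf_intervalIntegrable μ hsupp hmom (by positivity)
          · gcongr <;> linarith
          · rw [div_le_one hN0]
            have : (k:ℝ) + 1 ≤ (M:ℝ) := by exact_mod_cast hk
            rw [hMcast] at this
            linarith)
      simp only [Nat.cast_zero, zero_div] at this
      rw [hθ, ← hMcast]
      convert this using 2 with j
      push_cast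
      ring
    calc ∫ u in (0:ℝ)..θ, f u
        = ∑ j ∈ Finset.range M, ∫ u in ((j:ℝ)/N)..(((j:ℝ)+1)/N), f u := hadj.symm
      _ = ∑ j ∈ Finset.range M, ∫ u in Set.Ioc ((j:ℝ)/N) (((j:ℝ)+1)/N), f u := by
          apply Finset.sum_congr rfl
          intro j _
          rw [intervalIntegral.integral_of_le (by gcongr <;> linarith)]
      _ ≤ ∑ j ∈ Finset.range M, f (((j:ℝ)+1)/N) * (N:ℝ)⁻¹ := by
          apply Finset.sum_le_sum
          intro j hj
          exact hstep j (Finset.mem_range.mp hj)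
      _ ≤ ∑ i ∈ Finset.range N, f ((i:ℝ)/N) * (N:ℝ)⁻¹ := by
          set t : ℕ → ℝ := fun i => f ((i:ℝ)/N) * (N:ℝ)⁻¹ with ht
          have hsucc : ∑ i ∈ Finset.range N, t i = (∑ j ∈ Finset.range M, t (j+1)) + t 0 := by
            rw [hNM, Finset.sum_range_succ']
          rw [hsucc]
          have h0 : 0 ≤ t 0 := mul_nonneg (qf_nonneg μ _) (by positivity)
          apply le_add_of_le_of_nonneg _ h0
          apply le_of_eq
          apply Finset.sum_congr rfl
          intro j _
          rw [ht]
          push_cast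
          ring_nf
      _ = ∑ i : Fin N, f ((i:ℝ)/N) * (N:ℝ)⁻¹ := hrange.symm
  -- splitting the full integral
  have hIoo_eq : ∫ u in Set.Ioo (0:ℝ) 1, f u = ∫ u in (0:ℝ)..1, f u := by
    rw [intervalIntegral.integral_of_le zero_le_one, setIntegral_congr_set MeasureTheory.Ioo_ae_eq_Ioc]
  have htail : ∫ u in Set.Ioc θ 1, f u = ∫ u in θ..(1:ℝ), f u := by
    rw [intervalIntegral.integral_of_le hθ1]
  have hsplit2 : ∫ u in (0:ℝ)..1, f u = (∫ u in (0:ℝ)..θ, f u) + ∫ u in θ..(1:ℝ), f u := by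
    rw [intervalIntegral.integral_add_adjacent_intervals
      (qf_intervalIntegrable μ hsupp hmom le_rfl hθ0 hθ1)
      (qf_intervalIntegrable μ hsupp hmom hθ0 hθ1 le_rfl)]
  calc ∫ u in Set.Ioo (0:ℝ) 1, |g u - f u|
      ≤ 2 * (∫ u in Set.Ioo (0:ℝ) 1, f u) - 2 * ∑ i : Fin N, f ((i:ℝ)/N) * (N:ℝ)⁻¹ := hsum
    _ ≤ 2 * (∫ u in Set.Ioo (0:ℝ) 1, f u) - 2 * ∫ u in (0:ℝ)..θ, f u := by
        have := hriemann
        linarith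
    _ = 2 * ∫ u in Set.Ioc θ 1, f u := by
        rw [hIoo_eq, hsplit2, htail]
        ring

lemma tail_tendsto (hsupp : μ (Set.Iio 0) = 0) (hmom : Integrable (fun x => x) μ) :
    Tendsto (fun N : ℕ => ∫ u in Set.Ioc (((N:ℝ)-1)/N) 1, qf μ u) atTop (𝓝 0) := by
  set f := qf μ with hf
  set ρ : Measure ℝ := volume.restrict (Set.Ioc (0:ℝ) 1) with hρ
  set F : ℕ → ℝ → ℝ := fun N u => (Set.Ioc (((N:ℝ)-1)/N) 1).indicator f u with hF
  have hint : IntegrableOn f (Set.Ioc (0:ℝ) 1) volume := qf_integrableOn_Ioc μ hsupp hmom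
  have hmain : Tendsto (fun N : ℕ => ∫ u, F N u ∂ρ) atTop (𝓝 (∫ (_ : ℝ), (0:ℝ) ∂ρ)) := by
    apply tendsto_integral_of_dominated_convergence (fun u => |f u|)
    · intro N
      exact hint.1.indicator measurableSet_Ioc
    · exact hint.abs
    · intro N
      apply ae_of_all
      intro u
      show ‖(Set.Ioc (((N:ℝ)-1)/N) 1).indicator f u‖ ≤ |f u|
      by_cases hu : u ∈ Set.Ioc (((N:ℝ)-1)/N) 1
      · rw [Set.indicator_of_mem hu, Real.norm_eq_abs]
      · rw [Set.indicator_of_notMem hu]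
        simp [abs_nonneg]
    · have hne : ∀ᵐ u ∂ρ, u ≠ 1 := by
        apply ae_restrict_of_ae
        have : volume ({(1:ℝ)} : Set ℝ) = 0 := Real.volume_singleton
        filter_upwards [measure_eq_zero_iff_ae_notMem.mp this] with u hu
        simpa using hu
      filter_upwards [hne] with u hu
      rcases lt_or_gt_of_ne hu with hlt | hgt
      · have hθ : Tendsto (fun N : ℕ => ((N:ℝ)-1)/N) atTop (𝓝 1) := by
          have h1 : Tendsto (fun N : ℕ => 1 - 1/(N:ℝ)) atTop (𝓝 (1 - 0)) :=
            tendsto_const_nhds.sub tendsto_one_div_atTop_nhds_zero_nat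
        
          rw [sub_zero] at h1
          apply h1.congr'
          filter_upwards [eventually_ge_atTop 1] with N hN
          have hN0 : (0:ℝ) < N := by exact_mod_cast hN
          field_simp
        have hev : ∀ᶠ N in atTop, F N u = 0 := by
          filter_upwards [hθ.eventually_const_lt hlt] with N hN
          show (Set.Ioc (((N:ℝ)-1)/N) 1).indicator f u = 0
          apply Set.indicator_of_notMem
          intro hmem
          exact absurd hmem.1 (not_lt.mpr hN.le)
        apply tendsto_const_nhds.congr'
        filter_upwards [hev] with N h
        exact h.symm
      · have : ∀ N : ℕ, F N u = 0 := by
          intro N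
          apply Set.indicator_of_notMem
          intro hmem
          exact absurd hmem.2 (not_le.mpr hgt)
        simpa [this] using tendsto_const_nhds (α := ℝ) (f := atTop (α := ℕ))
  rw [integral_zero] at hmain
  apply hmain.congr'
  filter_upwards [eventually_ge_atTop 1] with N hN
  have hN0 : (0:ℝ) < N := by exact_mod_cast hN
  have hθ0 : 0 ≤ ((N:ℝ)-1)/N := by
    apply div_nonneg _ hN0.le
    have : (1:ℝ) ≤ N := by exact_mod_cast hN
    linarith
  rw [hρ, hF, integral_indicator measurableSet_Ioc, Measure.restrict_restrict measurableSet_Ioc,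
    Set.inter_eq_left.mpr (Set.Ioc_subset_Ioc_left hθ0)]

/-- the 𝒰-quantizations converge to `μ` in 1-Wasserstein distance. -/
theorem stmt3 (μ : Measure ℝ) [IsProbabilityMeasure μ]
    (hsupp : μ (Set.Iio 0) = 0) (hmom : Integrable (fun x => x) μ) :
    Tendsto (fun N => Wdist (Uquant μ N) μ) atTop (𝓝 (0 : ℝ≥0∞)) := by
  have htail := tail_tendsto μ hsupp hmom
  have h2tail : Tendsto (fun N : ℕ => 2 * ∫ u in Set.Ioc (((N:ℝ)-1)/N) 1, qf μ u) atTop (𝓝 0) := by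
    simpa using htail.const_mul 2
  have hofReal : Tendsto (fun N : ℕ =>
      ENNReal.ofReal (2 * ∫ u in Set.Ioc (((N:ℝ)-1)/N) 1, qf μ u)) atTop (𝓝 0) := by
    have := ENNReal.tendsto_ofReal h2tail
    simpa using this
  apply tendsto_of_tendsto_of_tendsto_of_le_of_le' tendsto_const_nhds hofReal
  · exact Eventually.of_forall (fun N => zero_le (a := Wdist (Uquant μ N) μ))
  · filter_upwards [eventually_ge_atTop 1] with N hN
    have habs : IntegrableOn (fun u => |gN μ N u - qf μ u|) (Set.Ioo (0:ℝ) 1) volume :=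
      ((gN_integrableOn μ N hN).sub (qf_integrableOn μ hsupp hmom)).abs
    calc Wdist (Uquant μ N) μ
        ≤ ∫⁻ u, ENNReal.ofReal |gN μ N u - qf μ u| ∂nu := wdist_le μ N hN hsupp
      _ = ENNReal.ofReal (∫ u in Set.Ioo (0:ℝ) 1, |gN μ N u - qf μ u|) := by
          rw [MeasureTheory.ofReal_integral_eq_lintegral_ofReal habs
            (ae_of_all _ (fun u => abs_nonneg _))]
      _ ≤ ENNReal.ofReal (2 * ∫ u in Set.Ioc (((N:ℝ)-1)/N) 1, qf μ u) :=
          ENNReal.ofReal_le_ofReal (key_bound μ N hN hsupp hmom)
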